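/- Let H be a finite-dimensional real Hilbert space with inner product a and norm ‖·‖_a, W a subspace, u_h ∈ H, u^ms the a-orthogonal projection of u_h onto the a-orthogonal complement of W, and 𝔠 the a-orthogonal projection onto W. Let u_d ∈ H be any element with u_h − u_d ∈ W, and let 𝔠_k : span{u_d} → W be a linear map. If V_k is any subspace of H containing u_d − 𝔠_k u_d and u_k ∈ V_k is the a-orthogonal projection of u_h onto V_k (i.e., the Galerkin solution in V_k), then ‖u_h − u_k‖_a ≤ ‖u_h − u^ms‖_a + ‖𝔠 u_d − 𝔠_k u_d‖_a. -/

import Mathlib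

theorem localized_error_splitting {H : Type*} [NormedAddCommGroup H]
    [InnerProductSpace ℝ H] [FiniteDimensional ℝ H]
    (W : Submodule ℝ H) (uh ud : H)
    (hud : uh - ud ∈ W)
    (ckud : H) (hck : ckud ∈ W)
    (Vk : Submodule ℝ H) (hVk : ud - ckud ∈ Vk) :
    ‖uh - (Submodule.orthogonalProjectionOnto Vk uh : H)‖ ≤
      ‖uh - (Submodule.orthogonalProjectionOnto Wᗮ uh : H)‖ +
        ‖(Submodule.orthogonalProjectionOnto W ud : H) - ckud‖ := by
  have hbest : ‖uh - (Submodule.orthogonalProjectionOnto Vk uh : H)‖ ≤ ‖uh - (ud - ckud)‖ := by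
    rw [← Submodule.starProjection_apply, Submodule.starProjection_minimal (U := Vk) uh]
    exact ciInf_le ⟨0, by rintro x ⟨v, rfl⟩; exact norm_nonneg _⟩ (⟨ud - ckud, hVk⟩ : Vk)
  have hW : (Submodule.orthogonalProjectionOnto W (uh - ud) : H) = uh - ud :=
    Submodule.starProjection_eq_self_iff.mpr hud
  have hPWuh : uh - (Submodule.orthogonalProjectionOnto Wᗮ uh : H) = (Submodule.orthogonalProjectionOnto W uh : H) := by
    exact (eq_sub_of_add_eq (Submodule.starProjection_add_starProjection_orthogonal (K := W) uh)).symm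
  have hsplit : uh - (ud - ckud)
      = (uh - (Submodule.orthogonalProjectionOnto Wᗮ uh : H))
        - ((Submodule.orthogonalProjectionOnto W ud : H) - ckud) := by
    rw [hPWuh]
    have : (Submodule.orthogonalProjectionOnto W uh : H) - (Submodule.orthogonalProjectionOnto W ud : H) = uh - ud := by
      rw [← hW, map_sub]; rfl
    have h2 : (Submodule.orthogonalProjectionOnto W uh : H)
        = uh - ud + (Submodule.orthogonalProjectionOnto W ud : H) := by
      rw [← this]; abel
    rw [h2]; abel
  calc ‖uh - (Submodule.orthogonalProjectionOnto Vk uh : H)‖ ≤ ‖uh - (ud - ckud)‖ := hbest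
    _ ≤ _ := by rw [hsplit]; exact norm_sub_le _ _
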